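/- (Unified convergence of two-timescale Q-learning.) Let 𝒳, 𝒜 be finite sets, h, γ > 0, f a cost with 0 ≤ f(x,a,μ) ≤ F and |f(x,a,μ₁) − f(x,a,μ₂)| ≤ L_f ‖μ₁−μ₂‖_TV, transition probabilities p(x'|x,a,μ) with induced kernels P^{Q,μ}(x,x') = p(x'|x, argmin_a Q(x,a), μ) satisfying Σ_{x'} |P^{Q₁,μ₁}(x,x') − P^{Q₂,μ₂}(x,x')| ≤ L_p ‖μ₁−μ₂‖_TV + L_Q ‖Q₁−Q₂‖_∞ (0 < L_p < 1, L_Q > 0), Σ_{x'} |p(x'|x,a,μ₁) − p(x'|x,a,μ₂)| ≤ L_p ‖μ₁−μ₂‖_TV for all x,a, and the uniform Doeblin condition P^{Q,μ}(x,x') ≥ β ν(x') for all x,x',Q,μ with β ∈ ((1+L_p)/2, 1). Let 0 < ρ^μ ≤ 1 and 0 < ρ^Q ≤ 1, and run the two-timescale iteration μ_{k+1} = μ_k + ρ^μ (μ_k P^{Q_k,μ_k} − μ_k), Q_{k+1}(x,a) = Q_k(x,a) + ρ^Q 𝒯(Q_k,μ_k)(x,a), where 𝒯(Q,μ)(x,a)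 = h f(x,a,μ) + e^{−γh} Σ_{x'} p(x'|x,a,μ) min_{a'} Q(x',a') − Q(x,a), with ‖Q_k‖_∞ ≤ hF/(1 − e^{−γh}) for all k. Let F* denote the nonempty set of Q-components of fixed-point pairs (Q*, μ̃*) of the Bellman equation Q*(x,a) = h f(x,a,μ̃*) + e^{−γh} Σ_{x'} p(x'|x,a,μ̃*) min_{a'} Q*(x',a') coupled with μ̃* = μ̃* P^{Q*,μ̃*}, let μ̃_k be the unique probability distribution with μ̃_k = μ̃_k P^{Q_k,μ̃_k}, and for a weight W > 0 define the Lyapunov function ℒ_k = W·min_{Q* ∈ F*} ‖Q_k − Q*‖_∞ + ‖μ_k − μ̃_k‖_TV. Set Λ_μ = 1 − ρ^μ(2β − 1 − L_p), c₁ = ρ^Q(1 − e^{−γh} − (L_f + L_p F/(e^{γh}−1)) h L_Q/(2β−1−L_p)) − 2Λ_μ L_Q/(W(2β−1−L_p)), c₂ = 1 − Λ_μ − W ρ^Q h (L_f + L_p F/(e^{γh}−1)), and c = min{c₁, c₂}, and assume c ∈ (0,1). Then for all k ≥ 0, ℒ_k ≤ (1−c)^k ℒ₀ + 2 h Λ_μ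 L_Q ρ^Q F / (c (1 − e^{−γh}) (2β − 1 − L_p)). -/

import Mathlib

open Finset

/-- A probability distribution on a finite set. -/
def IsProb {𝒳 : Type*} [Fintype 𝒳] (μ : 𝒳 → ℝ) : Prop :=
  (∀ x, 0 ≤ μ x) ∧ ∑ x, μ x = 1

/-- Total variation norm: `‖m‖_TV = sup_{A ⊆ 𝒳} |Σ_{x∈A} m(x)|`. -/
noncomputable def tvNorm {𝒳 : Type*} [Fintype 𝒳] (m : 𝒳 → ℝ) : ℝ :=
  ⨆ A : Finset 𝒳, |∑ x ∈ A, m x|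

/-- Sup norm `‖Q‖_∞ = max_{(x,a)} |Q(x,a)|` for `Q : 𝒳 × 𝒜 → ℝ`. -/
noncomputable def supNorm {𝒳 𝒜 : Type*} [Fintype 𝒳] [Fintype 𝒜] (Q : 𝒳 → 𝒜 → ℝ) : ℝ :=
  ⨆ q : 𝒳 × 𝒜, |Q q.1 q.2|

section AuxTT
variable {𝒳 𝒜 : Type*} [Fintype 𝒳] [Fintype 𝒜]

lemma tt_abs_sum_le_tvNorm (m : 𝒳 → ℝ) (A : Finset 𝒳) : |∑ x ∈ A, m x| ≤ tvNorm m :=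
  le_ciSup (f := fun A : Finset 𝒳 => |∑ x ∈ A, m x|) (Set.finite_range _).bddAbove A

lemma tt_tvNorm_le {m : 𝒳 → ℝ} {C : ℝ} (h : ∀ A : Finset 𝒳, |∑ x ∈ A, m x| ≤ C) :
    tvNorm m ≤ C := ciSup_le h

lemma tt_tvNorm_nonneg (m : 𝒳 → ℝ) : 0 ≤ tvNorm m := by
  have := tt_abs_sum_le_tvNorm m ∅
  simpa using this

lemma tt_abs_le_tvNorm (m : 𝒳 → ℝ) (x : 𝒳) : |m x| ≤ tvNorm m := by
  have := tt_abs_sum_le_tvNorm m {x}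
  simpa using this

lemma tt_abs_sum_le_half (v : 𝒳 → ℝ) (hv : ∑ x, v x = 0) (A : Finset 𝒳) :
    |∑ x ∈ A, v x| ≤ (∑ x, |v x|) / 2 := by
  classical
  have h1 : ∑ x ∈ A, v x + ∑ x ∈ Aᶜ, v x = 0 := by
    rw [Finset.sum_add_sum_compl]; exact hv
  have h2 : |∑ x ∈ A, v x| ≤ ∑ x ∈ A, |v x| := Finset.abs_sum_le_sum_abs _ _
  have h3 : |∑ x ∈ Aᶜ, v x| ≤ ∑ x ∈ Aᶜ, |v x| := Finset.abs_sum_le_sum_abs _ _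
  have h4 : ∑ x ∈ A, |v x| + ∑ x ∈ Aᶜ, |v x| = ∑ x, |v x| := Finset.sum_add_sum_compl _ _
  have h5 : |∑ x ∈ Aᶜ, v x| = |∑ x ∈ A, v x| := by
    have : ∑ x ∈ Aᶜ, v x = -∑ x ∈ A, v x := by linarith
    rw [this, abs_neg]
  linarith

lemma tt_sum_abs_le_two_tvNorm (m : 𝒳 → ℝ) (hm : ∑ x, m x = 0) :
    ∑ x, |m x| ≤ 2 * tvNorm m := by
  classical
  set A := Finset.univ.filter (fun x => 0 ≤ m x) with hA
  have h1 : ∑ x ∈ A, |m x| = ∑ x ∈ A, m x := by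
    apply Finset.sum_congr rfl; intro x hx
    exact abs_of_nonneg (by simpa [hA] using hx)
  have h2 : ∑ x ∈ Aᶜ, |m x| = -∑ x ∈ Aᶜ, m x := by
    rw [← Finset.sum_neg_distrib]
    apply Finset.sum_congr rfl; intro x hx
    have : ¬ (0 ≤ m x) := by
      simp only [hA, Finset.mem_compl, Finset.mem_filter, Finset.mem_univ, true_and] at hx
      exact hx
    exact abs_of_neg (lt_of_not_ge this)
  have h3 : ∑ x ∈ A, m x + ∑ x ∈ Aᶜ, m x = 0 := by
    rw [Finset.sum_add_sum_compl]; exact hm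
  have h4 : ∑ x ∈ A, |m x| + ∑ x ∈ Aᶜ, |m x| = ∑ x, |m x| := Finset.sum_add_sum_compl _ _
  have h5 : |∑ x ∈ A, m x| ≤ tvNorm m := tt_abs_sum_le_tvNorm m A
  have h6 : ∑ x ∈ A, m x ≤ |∑ x ∈ A, m x| := le_abs_self _
  linarith

lemma tt_doeblin_bound (m ν : 𝒳 → ℝ) (P : 𝒳 → 𝒳 → ℝ) (β : ℝ)
    (hm : ∑ x, m x = 0) (hβ0 : 0 ≤ β) (hβ1 : β ≤ 1)
    (hν : IsProb ν) (hP : ∀ x, IsProb (P x))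
    (hD : ∀ x x', β * ν x' ≤ P x x') (A : Finset 𝒳) :
    |∑ x' ∈ A, ∑ x, m x * P x x'| ≤ (1 - β) * tvNorm m := by
  classical
  have hswap : ∑ x' ∈ A, ∑ x, m x * P x x' = ∑ x, m x * ∑ x' ∈ A, P x x' := by
    rw [Finset.sum_comm]
    exact Finset.sum_congr rfl fun x _ => (Finset.mul_sum _ _ _).symm
  set κ : ℝ := β * ∑ x' ∈ A, ν x' + (1 - β) / 2 with hκ
  have hshift : ∑ x, m x * ∑ x' ∈ A, P x x' = ∑ x, m x * (∑ x' ∈ A, P x x' - κ) := by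
    rw [Finset.sum_congr rfl (fun x _ => by ring_nf :
      ∀ x ∈ Finset.univ, m x * (∑ x' ∈ A, P x x' - κ) = m x * ∑ x' ∈ A, P x x' - m x * κ)]
    rw [Finset.sum_sub_distrib, ← Finset.sum_mul, hm]
    ring
  have hbound : ∀ x, |∑ x' ∈ A, P x x' - κ| ≤ (1 - β) / 2 := by
    intro x
    have hlow : β * ∑ x' ∈ A, ν x' ≤ ∑ x' ∈ A, P x x' := by
      rw [Finset.mul_sum]
      exact Finset.sum_le_sum fun x' _ => hD x x'
    have hup : ∑ x' ∈ A, P x x' - β * ∑ x' ∈ A, ν x' ≤ 1 - β := by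
      have h1 : ∑ x' ∈ A, (P x x' - β * ν x') ≤ ∑ x', (P x x' - β * ν x') := by
        apply Finset.sum_le_sum_of_subset_of_nonneg (Finset.subset_univ A)
        intro x' _ _
        have := hD x x'
        linarith
      have h2 : ∑ x', (P x x' - β * ν x') = 1 - β := by
        rw [Finset.sum_sub_distrib, (hP x).2, ← Finset.mul_sum, hν.2]
        ring
      rw [Finset.sum_sub_distrib, ← Finset.mul_sum] at h1
      linarith [h1, h2.symm.le, h2.le]
    rw [abs_le]
    constructor <;> [skip; skip] <;> · rw [hκ]; linarith
  calc |∑ x' ∈ A, ∑ x, m x * P x x'| = |∑ x, m x * (∑ x' ∈ A, P x x' - κ)| := by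
        rw [hswap, hshift]
    _ ≤ ∑ x, |m x * (∑ x' ∈ A, P x x' - κ)| := Finset.abs_sum_le_sum_abs _ _
    _ ≤ ∑ x, |m x| * ((1 - β) / 2) := by
        apply Finset.sum_le_sum; intro x _
        rw [abs_mul]
        exact mul_le_mul_of_nonneg_left (hbound x) (abs_nonneg _)
    _ = (∑ x, |m x|) * ((1 - β) / 2) := by rw [Finset.sum_mul]
    _ ≤ (2 * tvNorm m) * ((1 - β) / 2) := by
        apply mul_le_mul_of_nonneg_right (tt_sum_abs_le_two_tvNorm m hm)
        linarith
    _ = (1 - β) * tvNorm m := by ring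

lemma tt_abs_le_supNorm (Q : 𝒳 → 𝒜 → ℝ) (x : 𝒳) (a : 𝒜) : |Q x a| ≤ supNorm Q :=
  le_ciSup (f := fun q : 𝒳 × 𝒜 => |Q q.1 q.2|) (Set.finite_range _).bddAbove (x, a)

lemma tt_supNorm_le [Nonempty 𝒳] [Nonempty 𝒜] {Q : 𝒳 → 𝒜 → ℝ} {C : ℝ} (h : ∀ x a, |Q x a| ≤ C) : supNorm Q ≤ C :=
  ciSup_le fun q => h q.1 q.2

lemma tt_supNorm_nonneg [Nonempty 𝒳] [Nonempty 𝒜] (Q : 𝒳 → 𝒜 → ℝ) : 0 ≤ supNorm Q :=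
  le_trans (abs_nonneg _) (tt_abs_le_supNorm Q (Classical.arbitrary _) (Classical.arbitrary _))

lemma tt_abs_iInf_le [Nonempty 𝒜] (Q : 𝒳 → 𝒜 → ℝ) (x : 𝒳) : |⨅ a, Q x a| ≤ supNorm Q := by
  rw [abs_le]
  constructor
  · apply le_ciInf
    intro a
    have := tt_abs_le_supNorm Q x a
    rw [abs_le] at this
    linarith [this.1]
  · calc (⨅ a, Q x a) ≤ Q x (Classical.arbitrary _) := ciInf_le (Set.finite_range _).bddBelow _
      _ ≤ |Q x (Classical.arbitrary _)| := le_abs_self _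
      _ ≤ supNorm Q := tt_abs_le_supNorm Q x _

lemma tt_abs_iInf_sub_iInf [Nonempty 𝒜] (Q R : 𝒳 → 𝒜 → ℝ) (x : 𝒳) :
    |(⨅ a, Q x a) - (⨅ a, R x a)| ≤ supNorm (fun x a => Q x a - R x a) := by
  set s := supNorm (fun x a => Q x a - R x a) with hs
  have hpt : ∀ (y : 𝒳) (a : 𝒜), |Q y a - R y a| ≤ s := fun y a =>
    tt_abs_le_supNorm (fun x a => Q x a - R x a) y a
  rw [abs_le]
  constructor
  · have h1 : ∀ a, (⨅ a, R x a) - s ≤ Q x a := by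
      intro a
      have h2 : (⨅ a', R x a') ≤ R x a := ciInf_le (Set.finite_range _).bddBelow _
      have h3 := (abs_le.mp (hpt x a)).1
      linarith
    have := le_ciInf h1
    linarith
  · have h1 : ∀ a, (⨅ a, Q x a) - s ≤ R x a := by
      intro a
      have h2 : (⨅ a', Q x a') ≤ Q x a := ciInf_le (Set.finite_range _).bddBelow _
      have h3 := (abs_le.mp (hpt x a)).2
      linarith
    have := le_ciInf h1
    linarith

lemma tt_tvNorm_zero : tvNorm (fun _ : 𝒳 => (0:ℝ)) = 0 := by
  apply le_antisymm
  · apply tt_tvNorm_le; intro A; simp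
  · exact tt_tvNorm_nonneg _

end AuxTT

set_option maxHeartbeats 2000000 in
/-- Unified convergence of the two-timescale Q-learning algorithm: the Lyapunov function
`ℒ_k = W·min_{Q*∈F*}‖Q_k − Q*‖_∞ + ‖μ_k − μ̃_k‖_TV` satisfies
`ℒ_k ≤ (1−c)^k ℒ₀ + 2hΛ_μL_Qρ^Q F/(c(1−e^{−γh})(2β−1−L_p))`. -/
theorem two_timescale_unified_convergence {𝒳 𝒜 : Type*} [Fintype 𝒳] [Fintype 𝒜]
    [Nonempty 𝒳] [Nonempty 𝒜]
    (h γ F Lf Lp LQ β ρμ ρQ W Λμ c₁ c₂ c : ℝ)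
    (hh : 0 < h) (hγ : 0 < γ)
    (hLp : 0 < Lp ∧ Lp < 1) (hLQ : 0 < LQ)
    (hβ : (1 + Lp) / 2 < β ∧ β < 1)
    (hρμ : 0 < ρμ ∧ ρμ ≤ 1) (hρQ : 0 < ρQ ∧ ρQ ≤ 1) (hW : 0 < W)
    (f : 𝒳 → 𝒜 → (𝒳 → ℝ) → ℝ)
    (hfb : ∀ x a μ, 0 ≤ f x a μ ∧ f x a μ ≤ F)
    (hflip : ∀ x a μ₁ μ₂, |f x a μ₁ - f x a μ₂| ≤ Lf * tvNorm (fun y => μ₁ y - μ₂ y))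
    (p : 𝒳 → 𝒳 → 𝒜 → (𝒳 → ℝ) → ℝ)
    (hp : ∀ x a μ, IsProb (fun x' => p x' x a μ))
    -- a fixed choice of minimizer `argmin_a Q(x,a)`
    (amin : (𝒳 → 𝒜 → ℝ) → 𝒳 → 𝒜)
    (hamin : ∀ (Q : 𝒳 → 𝒜 → ℝ) (x : 𝒳) (a : 𝒜), Q x (amin Q x) ≤ Q x a)
    -- Lipschitz bound for the induced kernels `P^{Q,μ}(x,x') = p(x'|x, amin Q x, μ)`
    (hPlip : ∀ (Q₁ Q₂ : 𝒳 → 𝒜 → ℝ) μ₁ μ₂, IsProb μ₁ → IsProb μ₂ → ∀ x,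
      ∑ x', |p x' x (amin Q₁ x) μ₁ - p x' x (amin Q₂ x) μ₂| ≤
        Lp * tvNorm (fun y => μ₁ y - μ₂ y) + LQ * supNorm (fun x a => Q₁ x a - Q₂ x a))
    (hplip : ∀ x a μ₁ μ₂, IsProb μ₁ → IsProb μ₂ →
      ∑ x', |p x' x a μ₁ - p x' x a μ₂| ≤ Lp * tvNorm (fun y => μ₁ y - μ₂ y))
    -- uniform Doeblin condition for the induced kernels
    (ν : 𝒳 → ℝ) (hν : IsProb ν)
    (hDoe : ∀ (Q : 𝒳 → 𝒜 → ℝ) μ, IsProb μ → ∀ x x', β * ν x' ≤ p x' x (amin Q x) μ)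
    -- the two-timescale iterates
    (μseq : ℕ → 𝒳 → ℝ) (Qseq : ℕ → 𝒳 → 𝒜 → ℝ)
    (hμ0 : IsProb (μseq 0))
    (hμrec : ∀ k x', μseq (k + 1) x' = μseq k x' +
      ρμ * ((∑ x, μseq k x * p x' x (amin (Qseq k) x) (μseq k)) - μseq k x'))
    (hQrec : ∀ k x a, Qseq (k + 1) x a = Qseq k x a +
      ρQ * (h * f x a (μseq k) +
        Real.exp (-γ * h) * (∑ x', p x' x a (μseq k) * (⨅ a', Qseq k x' a')) -
        Qseq k x a))
    (hQb : ∀ k, supNorm (Qseq k) ≤ h * F / (1 - Real.exp (-γ * h)))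
    -- the set `F*` of Q-components of fixed-point pairs, nonempty
    (FStar : Set (𝒳 → 𝒜 → ℝ))
    (hFStar : FStar = {Qs | ∃ μs : 𝒳 → ℝ, IsProb μs ∧
      (∀ x a, Qs x a = h * f x a μs +
        Real.exp (-γ * h) * ∑ x', p x' x a μs * (⨅ a', Qs x' a')) ∧
      (∀ x', (∑ x, μs x * p x' x (amin Qs x) μs) = μs x')})
    (hne : FStar.Nonempty)
    -- the unique equilibrium distribution `μ̃_k = μ̃_k P^{Q_k,μ̃_k}` at each step
    (μtil : ℕ → 𝒳 → ℝ)
    (hμtil : ∀ k, IsProb (μtil k) ∧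
      ∀ x', (∑ x, μtil k x * p x' x (amin (Qseq k) x) (μtil k)) = μtil k x')
    -- the Lyapunov function
    (L : ℕ → ℝ)
    (hL : ∀ k, L k = W * sInf ((fun Qs : 𝒳 → 𝒜 → ℝ =>
        supNorm (fun x a => Qseq k x a - Qs x a)) '' FStar) +
      tvNorm (fun x => μseq k x - μtil k x))
    -- the constants
    (hΛμ : Λμ = 1 - ρμ * (2 * β - 1 - Lp))
    (hc₁ : c₁ = ρQ * (1 - Real.exp (-γ * h) -
        (Lf + Lp * F / (Real.exp (γ * h) - 1)) * h * LQ / (2 * β - 1 - Lp)) -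
      2 * Λμ * LQ / (W * (2 * β - 1 - Lp)))
    (hc₂ : c₂ = 1 - Λμ - W * ρQ * h * (Lf + Lp * F / (Real.exp (γ * h) - 1)))
    (hc : c = min c₁ c₂) (hcio : c ∈ Set.Ioo (0 : ℝ) 1) :
    ∀ k, L k ≤ (1 - c) ^ k * L 0 +
      2 * h * Λμ * LQ * ρQ * F /
        (c * (1 - Real.exp (-γ * h)) * (2 * β - 1 - Lp)) := by
  classical
  obtain ⟨hLp0, hLp1⟩ := hLp
  obtain ⟨hβl, hβu⟩ := hβ
  obtain ⟨hρμ0, hρμ1⟩ := hρμ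
  obtain ⟨hρQ0, hρQ1⟩ := hρQ
  obtain ⟨hc0, hcu⟩ := hcio
  set e := Real.exp (-γ * h) with he
  have hγh : 0 < γ * h := mul_pos hγ hh
  have he0 : 0 < e := Real.exp_pos _
  have he1 : e < 1 := by
    rw [he]; exact Real.exp_lt_one_iff.mpr (by nlinarith)
  have hσ : 0 < 1 - e := by linarith
  have hE1 : 1 < Real.exp (γ * h) := by
    calc (1:ℝ) = Real.exp 0 := Real.exp_zero.symm
      _ < Real.exp (γ * h) := Real.exp_lt_exp.mpr hγh
  have hE0 : 0 < Real.exp (γ * h) - 1 := by linarith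
  have heE : e * Real.exp (γ * h) = 1 := by
    rw [he, ← Real.exp_add]; norm_num
  have hδ : 0 < 2 * β - 1 - Lp := by linarith
  have hδ1 : 2 * β - 1 - Lp < 1 := by linarith
  have hΛ0 : 0 < Λμ := by rw [hΛμ]; nlinarith
  have hβ0 : 0 ≤ β := by linarith
  -- F ≥ 0 and Lf ≥ 0
  have hF0 : 0 ≤ F := by
    obtain ⟨x0⟩ := (inferInstance : Nonempty 𝒳)
    obtain ⟨a0⟩ := (inferInstance : Nonempty 𝒜)
    have := hfb x0 a0 (fun _ => 0)
    linarith [this.1, this.2]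
  have hLf0 : 0 ≤ Lf := by
    obtain ⟨x0⟩ := (inferInstance : Nonempty 𝒳)
    obtain ⟨a0⟩ := (inferInstance : Nonempty 𝒜)
    have h1 := hflip x0 a0 (fun y => if y = x0 then 1 else 0) (fun _ => 0)
    have h2 : (1:ℝ) ≤ tvNorm (fun y => (if y = x0 then (1:ℝ) else 0) - 0) := by
      have := tt_abs_le_tvNorm (fun y => (if y = x0 then (1:ℝ) else 0) - 0) x0
      simpa using this
    nlinarith [abs_nonneg (f x0 a0 (fun y => if y = x0 then (1:ℝ) else 0) - f x0 a0 (fun _ => 0)),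
      tt_tvNorm_nonneg (fun y => (if y = x0 then (1:ℝ) else 0) - 0)]
  set KK := Lf + Lp * F / (Real.exp (γ * h) - 1) with hKK
  have hKK0 : 0 ≤ KK := by
    rw [hKK]; positivity
  set M := h * F / (1 - e) with hM
  have hM0 : 0 ≤ M := by rw [hM]; positivity
  clear_value e KK M
  -- key0 : the induced kernel does not depend on Q
  have key0 : ∀ (Q₁ Q₂ : 𝒳 → 𝒜 → ℝ) (μ : 𝒳 → ℝ), IsProb μ → ∀ x x',
      p x' x (amin Q₁ x) μ = p x' x (amin Q₂ x) μ := by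
    intro Q₁ Q₂ μ hμ x
    have tv0 : tvNorm (fun y => μ y - μ y) = 0 := by
      have hfn : (fun y => μ y - μ y) = (fun _ : 𝒳 => (0:ℝ)) := funext fun y => sub_self _
      rw [hfn]; exact tt_tvNorm_zero
    have hP2 : ∀ (Qa Qb : 𝒳 → 𝒜 → ℝ),
        ∑ x', |p x' x (amin Qa x) μ - p x' x (amin Qb x) μ| ≤
          LQ * supNorm (fun x a => Qa x a - Qb x a) := by
      intro Qa Qb
      have := hPlip Qa Qb μ μ hμ hμ x
      rwa [tv0, mul_zero, zero_add] at this
    suffices hzero : ∑ x', |p x' x (amin Q₁ x) μ - p x' x (amin Q₂ x) μ| ≤ 0 by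
      intro x'
      have h1 : ∀ y ∈ Finset.univ, (0:ℝ) ≤ |p y x (amin Q₁ x) μ - p y x (amin Q₂ x) μ| :=
        fun y _ => abs_nonneg _
      have h2 : ∑ x', |p x' x (amin Q₁ x) μ - p x' x (amin Q₂ x) μ| = 0 :=
        le_antisymm hzero (Finset.sum_nonneg h1)
      have h3 := (Finset.sum_eq_zero_iff_of_nonneg h1).mp h2 x' (Finset.mem_univ x')
      have h4 := abs_eq_zero.mp h3
      linarith
    by_cases hall : ∀ a b : 𝒜, ∑ x', |p x' x a μ - p x' x b μ| = 0
    · exact le_of_eq (hall _ _)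
    · push_neg at hall
      set S : Finset (𝒜 × 𝒜) :=
        Finset.univ.filter (fun q : 𝒜 × 𝒜 => ∑ x', |p x' x q.1 μ - p x' x q.2 μ| ≠ 0) with hS
      have hSne : S.Nonempty := by
        obtain ⟨a, b, hab⟩ := hall
        exact ⟨(a, b), by simp [hS, hab]⟩
      set T := S.image (fun q : 𝒜 × 𝒜 => ∑ x', |p x' x q.1 μ - p x' x q.2 μ|) with hT
      have hTne : T.Nonempty := hSne.image _
      set η := T.min' hTne with hηdef
      have hηpos : 0 < η := by
        obtain ⟨q, hqS, hqe⟩ := Finset.mem_image.mp (T.min'_mem hTne)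
        have hne0 : ∑ x', |p x' x q.1 μ - p x' x q.2 μ| ≠ 0 := by
          have := hqS; rw [hS] at this; simpa using this
        have hge : 0 ≤ ∑ x', |p x' x q.1 μ - p x' x q.2 μ| :=
          Finset.sum_nonneg fun _ _ => abs_nonneg _
        rw [hηdef, ← hqe]
        exact lt_of_le_of_ne hge (Ne.symm hne0)
      have hsmall : ∀ a b : 𝒜, (∑ x', |p x' x a μ - p x' x b μ|) < η →
          (∑ x', |p x' x a μ - p x' x b μ|) = 0 := by
        intro a b hlt
        by_contra hne0
        have hmem : (a, b) ∈ S := by rw [hS]; simp [hne0]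
        have hmemT : (∑ x', |p x' x a μ - p x' x b μ|) ∈ T := by
          rw [hT]; exact Finset.mem_image_of_mem _ hmem
        exact absurd (T.min'_le _ hmemT) (not_le.mpr hlt)
      set s := supNorm (fun x a => Q₁ x a - Q₂ x a) with hsdef
      have hs0 : 0 ≤ s := by rw [hsdef]; exact tt_supNorm_nonneg _
      obtain ⟨N, hN⟩ := exists_nat_gt (LQ * s / η)
      have hNpos : 0 < (N:ℝ) :=
        lt_of_le_of_lt (div_nonneg (mul_nonneg hLQ.le hs0) hηpos.le) hN
      have hstepb : LQ * s / N < η := by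
        rw [div_lt_iff₀ hNpos]
        have hmm := mul_lt_mul_of_pos_right hN hηpos
        rw [div_mul_cancel₀ _ (ne_of_gt hηpos)] at hmm
        linarith
      set QQ : ℕ → 𝒳 → 𝒜 → ℝ := fun i y b => Q₁ y b + ((i:ℝ)/(N:ℝ)) * (Q₂ y b - Q₁ y b)
        with hQQ
      have hQQ0 : QQ 0 = Q₁ := by funext y b; rw [hQQ]; norm_num
      have hQQN : QQ N = Q₂ := by
        funext y b; rw [hQQ]
        field_simp
        ring
      have hstep : ∀ i : ℕ,
          ∑ x', |p x' x (amin (QQ i) x) μ - p x' x (amin (QQ (i+1)) x) μ| < η := by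
        intro i
        have hsup : supNorm (fun y b => QQ i y b - QQ (i+1) y b) ≤ s / N := by
          apply tt_supNorm_le
          intro y b
          have hpt : QQ i y b - QQ (i+1) y b = -(1/(N:ℝ)) * (Q₂ y b - Q₁ y b) := by
            rw [hQQ]; push_cast; field_simp; ring
          rw [hpt, abs_mul, abs_neg, abs_of_nonneg (by positivity : (0:ℝ) ≤ 1/(N:ℝ))]
          have h2 : |Q₂ y b - Q₁ y b| ≤ s := by
            rw [hsdef, abs_sub_comm]
            exact tt_abs_le_supNorm (fun x a => Q₁ x a - Q₂ x a) y b
          calc 1/(N:ℝ) * |Q₂ y b - Q₁ y b| ≤ 1/(N:ℝ) * s :=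
              mul_le_mul_of_nonneg_left h2 (by positivity)
            _ = s / N := by ring
        calc ∑ x', |p x' x (amin (QQ i) x) μ - p x' x (amin (QQ (i+1)) x) μ|
            ≤ LQ * supNorm (fun y b => QQ i y b - QQ (i+1) y b) := hP2 _ _
          _ ≤ LQ * (s/N) := mul_le_mul_of_nonneg_left hsup hLQ.le
          _ = LQ * s / N := by ring
          _ < η := hstepb
      have hchain : ∀ i : ℕ,
          ∑ x', |p x' x (amin Q₁ x) μ - p x' x (amin (QQ i) x) μ| = 0 := by
        intro i
        induction i with
        | zero => rw [hQQ0]; simp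
        | succ n ih =>
          have htri : ∑ x', |p x' x (amin Q₁ x) μ - p x' x (amin (QQ (n+1)) x) μ| ≤
              (∑ x', |p x' x (amin Q₁ x) μ - p x' x (amin (QQ n) x) μ|) +
              (∑ x', |p x' x (amin (QQ n) x) μ - p x' x (amin (QQ (n+1)) x) μ|) := by
            rw [← Finset.sum_add_distrib]
            exact Finset.sum_le_sum fun x' _ => abs_sub_le _ _ _
          apply hsmall
          calc ∑ x', |p x' x (amin Q₁ x) μ - p x' x (amin (QQ (n+1)) x) μ|
              ≤ (∑ x', |p x' x (amin Q₁ x) μ - p x' x (amin (QQ n) x) μ|) +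
                (∑ x', |p x' x (amin (QQ n) x) μ - p x' x (amin (QQ (n+1)) x) μ|) := htri
            _ = ∑ x', |p x' x (amin (QQ n) x) μ - p x' x (amin (QQ (n+1)) x) μ| := by
                rw [ih, zero_add]
            _ < η := hstep n
      have hfin := hchain N
      rw [hQQN] at hfin
      exact le_of_eq hfin
  -- μseq is a sequence of probability measures
  have hprob : ∀ k, IsProb (μseq k) := by
    intro k
    induction k with
    | zero => exact hμ0
    | succ k ih =>
      have hSS : ∑ x', ∑ x, μseq k x * p x' x (amin (Qseq k) x) (μseq k) = 1 := by
        rw [Finset.sum_comm]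
        calc ∑ x, ∑ x', μseq k x * p x' x (amin (Qseq k) x) (μseq k)
            = ∑ x, μseq k x * ∑ x', p x' x (amin (Qseq k) x) (μseq k) :=
              Finset.sum_congr rfl fun x _ => (Finset.mul_sum _ _ _).symm
          _ = ∑ x, μseq k x * 1 :=
              Finset.sum_congr rfl fun x _ => by rw [(hp x (amin (Qseq k) x) (μseq k)).2]
          _ = 1 := by simp [ih.2]
      constructor
      · intro x'
        rw [hμrec k x']
        have h1 : 0 ≤ ∑ x, μseq k x * p x' x (amin (Qseq k) x) (μseq k) :=
          Finset.sum_nonneg fun x _ =>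
            mul_nonneg (ih.1 x) ((hp x (amin (Qseq k) x) (μseq k)).1 x')
        have h2 : 0 ≤ (1 - ρμ) * μseq k x' := mul_nonneg (by linarith) (ih.1 x')
        have h3 : 0 ≤ ρμ * ∑ x, μseq k x * p x' x (amin (Qseq k) x) (μseq k) :=
          mul_nonneg hρμ0.le h1
        nlinarith
      · have hsum : ∀ x' ∈ Finset.univ, μseq (k+1) x' = (1 - ρμ) * μseq k x' +
            ρμ * ∑ x, μseq k x * p x' x (amin (Qseq k) x) (μseq k) := by
          intro x' _; rw [hμrec k x']; ring
        calc ∑ x', μseq (k+1) x'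
            = ∑ x', ((1 - ρμ) * μseq k x' +
              ρμ * ∑ x, μseq k x * p x' x (amin (Qseq k) x) (μseq k)) :=
              Finset.sum_congr rfl hsum
          _ = (1 - ρμ) * ∑ x', μseq k x' +
              ρμ * ∑ x', ∑ x, μseq k x * p x' x (amin (Qseq k) x) (μseq k) := by
              rw [Finset.sum_add_distrib, ← Finset.mul_sum, ← Finset.mul_sum]
          _ = 1 := by rw [ih.2, hSS]; ring
  -- one-step kernel contraction
  have contract : ∀ (Q : 𝒳 → 𝒜 → ℝ) (m₁ m₂ : 𝒳 → ℝ), IsProb m₁ → IsProb m₂ →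
      tvNorm (fun x' => (∑ x, m₁ x * p x' x (amin Q x) m₁) -
          (∑ x, m₂ x * p x' x (amin Q x) m₂)) ≤
        (1 - β + Lp / 2) * tvNorm (fun x => m₁ x - m₂ x) := by
    intro Q m₁ m₂ h₁ h₂
    apply tt_tvNorm_le
    intro A
    have hsplit : ∀ x' ∈ A, (∑ x, m₁ x * p x' x (amin Q x) m₁) -
        (∑ x, m₂ x * p x' x (amin Q x) m₂)
        = (∑ x, (m₁ x - m₂ x) * p x' x (amin Q x) m₂)
          + (∑ x, m₁ x * (p x' x (amin Q x) m₁ - p x' x (amin Q x) m₂)) := by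
      intro x' _
      rw [← Finset.sum_add_distrib, ← Finset.sum_sub_distrib]
      exact Finset.sum_congr rfl fun x _ => by ring
    have heq : ∑ x' ∈ A, ((∑ x, m₁ x * p x' x (amin Q x) m₁) -
          (∑ x, m₂ x * p x' x (amin Q x) m₂))
        = (∑ x' ∈ A, ∑ x, (m₁ x - m₂ x) * p x' x (amin Q x) m₂)
          + (∑ x' ∈ A, ∑ x, m₁ x * (p x' x (amin Q x) m₁ - p x' x (amin Q x) m₂)) := by
      rw [Finset.sum_congr rfl hsplit, Finset.sum_add_distrib]
    have hT1 : |∑ x' ∈ A, ∑ x, (m₁ x - m₂ x) * p x' x (amin Q x) m₂| ≤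
        (1 - β) * tvNorm (fun x => m₁ x - m₂ x) :=
      tt_doeblin_bound (fun x => m₁ x - m₂ x) ν (fun x x' => p x' x (amin Q x) m₂) β
        (by rw [Finset.sum_sub_distrib, h₁.2, h₂.2]; ring) (by linarith) hβu.le hν
        (fun x => hp x (amin Q x) m₂) (fun x x' => hDoe Q m₂ h₂ x x') A
    have hT2 : |∑ x' ∈ A, ∑ x, m₁ x * (p x' x (amin Q x) m₁ - p x' x (amin Q x) m₂)| ≤
        Lp * tvNorm (fun x => m₁ x - m₂ x) / 2 := by
      have hswap : ∑ x' ∈ A, ∑ x, m₁ x * (p x' x (amin Q x) m₁ - p x' x (amin Q x) m₂)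
          = ∑ x, m₁ x * ∑ x' ∈ A, (p x' x (amin Q x) m₁ - p x' x (amin Q x) m₂) := by
        rw [Finset.sum_comm]
        exact Finset.sum_congr rfl fun x _ => (Finset.mul_sum _ _ _).symm
      rw [hswap]
      have hrow : ∀ x : 𝒳, |∑ x' ∈ A, (p x' x (amin Q x) m₁ - p x' x (amin Q x) m₂)| ≤
          Lp * tvNorm (fun y => m₁ y - m₂ y) / 2 := by
        intro x
        have hz : ∑ x', (p x' x (amin Q x) m₁ - p x' x (amin Q x) m₂) = 0 := by
          rw [Finset.sum_sub_distrib, (hp x (amin Q x) m₁).2, (hp x (amin Q x) m₂).2]; ring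
        have hhalf := tt_abs_sum_le_half
          (fun x' => p x' x (amin Q x) m₁ - p x' x (amin Q x) m₂) hz A
        have hlip := hplip x (amin Q x) m₁ m₂ h₁ h₂
        calc |∑ x' ∈ A, (p x' x (amin Q x) m₁ - p x' x (amin Q x) m₂)|
            ≤ (∑ x', |p x' x (amin Q x) m₁ - p x' x (amin Q x) m₂|) / 2 := hhalf
          _ ≤ Lp * tvNorm (fun y => m₁ y - m₂ y) / 2 := by linarith
      calc |∑ x, m₁ x * ∑ x' ∈ A, (p x' x (amin Q x) m₁ - p x' x (amin Q x) m₂)|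
          ≤ ∑ x, |m₁ x * ∑ x' ∈ A, (p x' x (amin Q x) m₁ - p x' x (amin Q x) m₂)| :=
            Finset.abs_sum_le_sum_abs _ _
        _ ≤ ∑ x, m₁ x * (Lp * tvNorm (fun y => m₁ y - m₂ y) / 2) := by
            apply Finset.sum_le_sum; intro x _
            rw [abs_mul, abs_of_nonneg (h₁.1 x)]
            exact mul_le_mul_of_nonneg_left (hrow x) (h₁.1 x)
        _ = Lp * tvNorm (fun y => m₁ y - m₂ y) / 2 := by rw [← Finset.sum_mul, h₁.2, one_mul]
    calc |∑ x' ∈ A, ((∑ x, m₁ x * p x' x (amin Q x) m₁) -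
          (∑ x, m₂ x * p x' x (amin Q x) m₂))|
        ≤ |∑ x' ∈ A, ∑ x, (m₁ x - m₂ x) * p x' x (amin Q x) m₂|
          + |∑ x' ∈ A, ∑ x, m₁ x * (p x' x (amin Q x) m₁ - p x' x (amin Q x) m₂)| := by
          rw [heq]; exact abs_add_le _ _
      _ ≤ (1 - β) * tvNorm (fun x => m₁ x - m₂ x) + Lp * tvNorm (fun x => m₁ x - m₂ x) / 2 :=
          add_le_add hT1 hT2
      _ = (1 - β + Lp / 2) * tvNorm (fun x => m₁ x - m₂ x) := by ring
  -- uniqueness of invariant distributions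
  have uniq : ∀ (Qa Qb : 𝒳 → 𝒜 → ℝ) (m₁ m₂ : 𝒳 → ℝ), IsProb m₁ → IsProb m₂ →
      (∀ x', (∑ x, m₁ x * p x' x (amin Qa x) m₁) = m₁ x') →
      (∀ x', (∑ x, m₂ x * p x' x (amin Qb x) m₂) = m₂ x') → m₁ = m₂ := by
    intro Qa Qb m₁ m₂ h₁ h₂ inv₁ inv₂
    have inv₂' : ∀ x', (∑ x, m₂ x * p x' x (amin Qa x) m₂) = m₂ x' := by
      intro x'
      rw [← inv₂ x']
      exact Finset.sum_congr rfl fun x _ => by rw [key0 Qa Qb m₂ h₂ x x']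
    have hrw : (fun x => m₁ x - m₂ x) = (fun x' => (∑ x, m₁ x * p x' x (amin Qa x) m₁) -
        (∑ x, m₂ x * p x' x (amin Qa x) m₂)) := by
      funext x'
      rw [inv₁ x', inv₂' x']
    have hcon := contract Qa m₁ m₂ h₁ h₂
    rw [← hrw] at hcon
    have htv0 : tvNorm (fun x => m₁ x - m₂ x) ≤ 0 := by
      have hhint := mul_nonneg hδ.le (tt_tvNorm_nonneg (fun x => m₁ x - m₂ x))
      nlinarith [hcon, tt_tvNorm_nonneg (fun x => m₁ x - m₂ x)]
    funext x
    have h5 := tt_abs_le_tvNorm (fun x => m₁ x - m₂ x) x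
    have h6 : m₁ x - m₂ x = 0 := abs_eq_zero.mp (le_antisymm (le_trans h5 htv0) (abs_nonneg _))
    linarith
  obtain ⟨Qs₀, hQs₀F⟩ := hne
  have hQs₀mem := hQs₀F
  rw [hFStar] at hQs₀mem
  obtain ⟨μs, hμsP, hμsQ, hμsInv⟩ := hQs₀mem
  have μtileq : ∀ k, μtil k = μs := fun k =>
    uniq (Qseq k) Qs₀ (μtil k) μs (hμtil k).1 hμsP (hμtil k).2 hμsInv
  -- norm bound for fixed points
  have hQsb : ∀ Qs ∈ FStar, supNorm Qs ≤ M := by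
    intro Qs hQsF'
    rw [hFStar] at hQsF'
    obtain ⟨μs', hμs'P, hEq', _⟩ := hQsF'
    have hb : supNorm Qs ≤ h * F + e * supNorm Qs := by
      apply tt_supNorm_le
      intro x a
      rw [hEq' x a]
      have h1 : |f x a μs'| ≤ F := by
        have := hfb x a μs'; rw [abs_of_nonneg this.1]; exact this.2
      have h2 : |∑ x', p x' x a μs' * (⨅ a', Qs x' a')| ≤ supNorm Qs := by
        calc |∑ x', p x' x a μs' * (⨅ a', Qs x' a')|
            ≤ ∑ x', |p x' x a μs' * (⨅ a', Qs x' a')| := Finset.abs_sum_le_sum_abs _ _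
          _ ≤ ∑ x', p x' x a μs' * supNorm Qs := by
              apply Finset.sum_le_sum
              intro x' _
              rw [abs_mul, abs_of_nonneg ((hp x a μs').1 x')]
              exact mul_le_mul_of_nonneg_left (tt_abs_iInf_le Qs x') ((hp x a μs').1 x')
          _ = supNorm Qs := by rw [← Finset.sum_mul, (hp x a μs').2, one_mul]
      have h3 : |h * f x a μs'| ≤ h * F := by
        rw [abs_mul, abs_of_nonneg hh.le]
        exact mul_le_mul_of_nonneg_left h1 hh.le
      have h4 : |e * ∑ x', p x' x a μs' * (⨅ a', Qs x' a')| ≤ e * supNorm Qs := by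
        rw [abs_mul, abs_of_nonneg he0.le]
        exact mul_le_mul_of_nonneg_left h2 he0.le
      calc |h * f x a μs' + e * ∑ x', p x' x a μs' * (⨅ a', Qs x' a')|
          ≤ |h * f x a μs'| + |e * ∑ x', p x' x a μs' * (⨅ a', Qs x' a')| := abs_add_le _ _
        _ ≤ h * F + e * supNorm Qs := add_le_add h3 h4
    rw [hM, le_div_iff₀ hσ]
    nlinarith [hb]
  -- μ-step estimate
  have mustep : ∀ k, tvNorm (fun x => μseq (k+1) x - μs x) ≤
      (1 - ρμ * (β - Lp/2)) * tvNorm (fun x => μseq k x - μs x) := by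
    intro k
    have hinv : ∀ x', (∑ x, μs x * p x' x (amin (Qseq k) x) μs) = μs x' := by
      intro x'
      rw [← hμsInv x']
      exact Finset.sum_congr rfl fun x _ => by rw [key0 (Qseq k) Qs₀ μs hμsP x x']
    have ht0 : 0 ≤ tvNorm (fun x => μseq k x - μs x) := tt_tvNorm_nonneg _
    apply tt_tvNorm_le
    intro A
    have hrepr : ∀ x' ∈ A, μseq (k+1) x' - μs x' =
        (1 - ρμ) * (μseq k x' - μs x') +
        ρμ * ((∑ x, μseq k x * p x' x (amin (Qseq k) x) (μseq k)) -
              (∑ x, μs x * p x' x (amin (Qseq k) x) μs)) := by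
      intro x' _
      rw [hμrec k x', hinv x']
      ring
    have heq : ∑ x' ∈ A, (μseq (k+1) x' - μs x') =
        (1 - ρμ) * ∑ x' ∈ A, (μseq k x' - μs x') +
        ρμ * ∑ x' ∈ A, ((∑ x, μseq k x * p x' x (amin (Qseq k) x) (μseq k)) -
              (∑ x, μs x * p x' x (amin (Qseq k) x) μs)) := by
      rw [Finset.sum_congr rfl hrepr, Finset.sum_add_distrib, Finset.mul_sum, Finset.mul_sum]
    have hd := tt_abs_sum_le_tvNorm (fun x => μseq k x - μs x) A
    have hker : |∑ x' ∈ A, ((∑ x, μseq k x * p x' x (amin (Qseq k) x) (μseq k)) -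
          (∑ x, μs x * p x' x (amin (Qseq k) x) μs))| ≤
        (1 - β + Lp / 2) * tvNorm (fun x => μseq k x - μs x) :=
      le_trans (tt_abs_sum_le_tvNorm _ A) (contract (Qseq k) (μseq k) μs (hprob k) hμsP)
    calc |∑ x' ∈ A, (μseq (k+1) x' - μs x')|
        ≤ (1 - ρμ) * |∑ x' ∈ A, (μseq k x' - μs x')| +
          ρμ * |∑ x' ∈ A, ((∑ x, μseq k x * p x' x (amin (Qseq k) x) (μseq k)) -
              (∑ x, μs x * p x' x (amin (Qseq k) x) μs))| := by
          rw [heq]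
          calc |(1 - ρμ) * ∑ x' ∈ A, (μseq k x' - μs x') + ρμ * ∑ x' ∈ A, _|
              ≤ |(1 - ρμ) * ∑ x' ∈ A, (μseq k x' - μs x')| + |ρμ * ∑ x' ∈ A, _| := abs_add_le _ _
            _ = (1 - ρμ) * |∑ x' ∈ A, (μseq k x' - μs x')| + ρμ * |∑ x' ∈ A, _| := by
                rw [abs_mul, abs_mul, abs_of_nonneg (by linarith : (0:ℝ) ≤ 1 - ρμ),
                  abs_of_nonneg hρμ0.le]
      _ ≤ (1 - ρμ) * tvNorm (fun x => μseq k x - μs x) +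
          ρμ * ((1 - β + Lp / 2) * tvNorm (fun x => μseq k x - μs x)) :=
          add_le_add (mul_le_mul_of_nonneg_left hd (by linarith))
            (mul_le_mul_of_nonneg_left hker hρμ0.le)
      _ = (1 - ρμ * (β - Lp/2)) * tvNorm (fun x => μseq k x - μs x) := by ring
  -- Q-step estimate
  have qstep : ∀ k (Qs : 𝒳 → 𝒜 → ℝ), Qs ∈ FStar →
      supNorm (fun x a => Qseq (k+1) x a - Qs x a) ≤
        (1 - ρQ * (1 - e)) * supNorm (fun x a => Qseq k x a - Qs x a) +
        ρQ * (h * Lf + e * Lp * M) * tvNorm (fun x => μseq k x - μs x) := by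
    intro k Qs hQsF'
    have hQsM := hQsb Qs hQsF'
    rw [hFStar] at hQsF'
    obtain ⟨μs', hμs'P, hEq', hInv'⟩ := hQsF'
    have hμs'eq : μs' = μs := uniq Qs Qs₀ μs' μs hμs'P hμsP hInv' hμsInv
    rw [hμs'eq] at hEq'
    set a := supNorm (fun x b => Qseq k x b - Qs x b) with hadef
    set t := tvNorm (fun x => μseq k x - μs x) with htdef
    have ha0 : 0 ≤ a := tt_supNorm_nonneg _
    have ht0 : 0 ≤ t := tt_tvNorm_nonneg _
    apply tt_supNorm_le
    intro x b
    have hrepr : Qseq (k+1) x b - Qs x b =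
        (1 - ρQ) * (Qseq k x b - Qs x b) +
        ρQ * (h * (f x b (μseq k) - f x b μs) +
          e * ((∑ x', p x' x b (μseq k) * (⨅ a', Qseq k x' a')) -
               (∑ x', p x' x b μs * (⨅ a', Qs x' a')))) := by
      rw [hQrec k x b, hEq' x b]
      ring
    have hsplit : (∑ x', p x' x b (μseq k) * (⨅ a', Qseq k x' a')) -
          (∑ x', p x' x b μs * (⨅ a', Qs x' a'))
        = (∑ x', p x' x b (μseq k) * ((⨅ a', Qseq k x' a') - (⨅ a', Qs x' a')))
          + (∑ x', (p x' x b (μseq k) - p x' x b μs) * (⨅ a', Qs x' a')) := by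
      rw [← Finset.sum_add_distrib, ← Finset.sum_sub_distrib]
      exact Finset.sum_congr rfl fun x' _ => by ring
    have hb1 : |∑ x', p x' x b (μseq k) * ((⨅ a', Qseq k x' a') - (⨅ a', Qs x' a'))| ≤ a := by
      calc |∑ x', p x' x b (μseq k) * ((⨅ a', Qseq k x' a') - (⨅ a', Qs x' a'))|
          ≤ ∑ x', |p x' x b (μseq k) * ((⨅ a', Qseq k x' a') - (⨅ a', Qs x' a'))| :=
            Finset.abs_sum_le_sum_abs _ _
        _ ≤ ∑ x', p x' x b (μseq k) * a := by
            apply Finset.sum_le_sum; intro x' _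
            rw [abs_mul, abs_of_nonneg ((hp x b (μseq k)).1 x')]
            exact mul_le_mul_of_nonneg_left (tt_abs_iInf_sub_iInf (Qseq k) Qs x')
              ((hp x b (μseq k)).1 x')
        _ = a := by rw [← Finset.sum_mul, (hp x b (μseq k)).2, one_mul]
    have hb2 : |∑ x', (p x' x b (μseq k) - p x' x b μs) * (⨅ a', Qs x' a')| ≤ Lp * t * M := by
      calc |∑ x', (p x' x b (μseq k) - p x' x b μs) * (⨅ a', Qs x' a')|
          ≤ ∑ x', |(p x' x b (μseq k) - p x' x b μs) * (⨅ a', Qs x' a')| :=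
            Finset.abs_sum_le_sum_abs _ _
        _ ≤ ∑ x', |p x' x b (μseq k) - p x' x b μs| * M := by
            apply Finset.sum_le_sum; intro x' _
            rw [abs_mul]
            exact mul_le_mul_of_nonneg_left (le_trans (tt_abs_iInf_le Qs x') hQsM)
              (abs_nonneg _)
        _ = (∑ x', |p x' x b (μseq k) - p x' x b μs|) * M := by rw [Finset.sum_mul]
        _ ≤ (Lp * t) * M := by
            apply mul_le_mul_of_nonneg_right _ hM0
            exact hplip x b (μseq k) μs (hprob k) hμsP
        _ = Lp * t * M := by ring
    have hb3 : |f x b (μseq k) - f x b μs| ≤ Lf * t := hflip x b (μseq k) μs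
    have hd : |Qseq k x b - Qs x b| ≤ a := by
      rw [hadef]; exact tt_abs_le_supNorm (fun x b => Qseq k x b - Qs x b) x b
    have hinner : |h * (f x b (μseq k) - f x b μs) +
          e * ((∑ x', p x' x b (μseq k) * (⨅ a', Qseq k x' a')) -
               (∑ x', p x' x b μs * (⨅ a', Qs x' a')))| ≤
        h * (Lf * t) + e * (a + Lp * t * M) := by
      rw [hsplit]
      have h5 : |(∑ x', p x' x b (μseq k) * ((⨅ a', Qseq k x' a') - (⨅ a', Qs x' a')))
            + (∑ x', (p x' x b (μseq k) - p x' x b μs) * (⨅ a', Qs x' a'))| ≤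
          a + Lp * t * M := le_trans (abs_add_le _ _) (add_le_add hb1 hb2)
      calc |h * (f x b (μseq k) - f x b μs) + e * _|
          ≤ |h * (f x b (μseq k) - f x b μs)| + |e * _| := abs_add_le _ _
        _ = h * |f x b (μseq k) - f x b μs| + e * |_| := by
            rw [abs_mul, abs_mul, abs_of_nonneg hh.le, abs_of_nonneg he0.le]
        _ ≤ h * (Lf * t) + e * (a + Lp * t * M) :=
            add_le_add (mul_le_mul_of_nonneg_left hb3 hh.le)
              (mul_le_mul_of_nonneg_left h5 he0.le)
    calc |Qseq (k+1) x b - Qs x b|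
        ≤ (1 - ρQ) * |Qseq k x b - Qs x b| +
          ρQ * |h * (f x b (μseq k) - f x b μs) +
            e * ((∑ x', p x' x b (μseq k) * (⨅ a', Qseq k x' a')) -
                 (∑ x', p x' x b μs * (⨅ a', Qs x' a')))| := by
          rw [hrepr]
          refine le_trans (abs_add_le _ _) ?_
          rw [abs_mul, abs_mul, abs_of_nonneg (by linarith : (0:ℝ) ≤ 1 - ρQ),
            abs_of_nonneg hρQ0.le]
      _ ≤ (1 - ρQ) * a + ρQ * (h * (Lf * t) + e * (a + Lp * t * M)) :=
          add_le_add (mul_le_mul_of_nonneg_left hd (by linarith))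
            (mul_le_mul_of_nonneg_left hinner hρQ0.le)
      _ = (1 - ρQ * (1 - e)) * a + ρQ * (h * Lf + e * Lp * M) * t := by ring
  -- coefficient facts
  have hKKe : h * Lf + e * Lp * M = h * KK := by
    rw [hM, hKK]
    have hkey : e * Lp * (h * F / (1 - e)) = h * (Lp * F / (Real.exp (γ * h) - 1)) := by
      rw [mul_div_assoc', mul_div_assoc', div_eq_div_iff hσ.ne' hE0.ne']
      linear_combination h * Lp * F * heE
    linear_combination hkey
  have hcap1 : c ≤ ρQ * (1 - e) := by
    have h1 : c ≤ c₁ := hc ▸ min_le_left _ _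
    have h2 : 0 ≤ KK * h * LQ / (2 * β - 1 - Lp) := by positivity
    have h3 : 0 ≤ 2 * Λμ * LQ / (W * (2 * β - 1 - Lp)) := by positivity
    rw [hc₁] at h1
    have h5 : ρQ * (1 - e - KK * h * LQ / (2 * β - 1 - Lp)) =
        ρQ * (1 - e) - ρQ * (KK * h * LQ / (2 * β - 1 - Lp)) := by ring
    rw [h5] at h1
    have h4 : 0 ≤ ρQ * (KK * h * LQ / (2 * β - 1 - Lp)) := mul_nonneg hρQ0.le h2
    linarith
  have hcap2 : W * ρQ * (h * Lf + e * Lp * M) + (1 - ρμ * (β - Lp/2)) ≤ 1 - c := by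
    have h1 : c ≤ c₂ := hc ▸ min_le_right _ _
    rw [hc₂] at h1
    have h2 : 1 - ρμ * (β - Lp/2) ≤ Λμ := by rw [hΛμ]; nlinarith
    rw [hKKe]
    have h3 : W * ρQ * (h * KK) = W * ρQ * h * KK := by ring
    rw [h3]
    linarith
  -- main per-step Lyapunov estimate
  have hLstep : ∀ k, L (k+1) ≤ (1 - c) * L k := by
    intro k
    have h1c : 0 < 1 - c := by linarith
    have hWne : W ≠ 0 := ne_of_gt hW
    have h1cne : (1:ℝ) - c ≠ 0 := ne_of_gt h1c
    have hSkne : ((fun Qs : 𝒳 → 𝒜 → ℝ =>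
        supNorm (fun x a => Qseq k x a - Qs x a)) '' FStar).Nonempty := ⟨_, Set.mem_image_of_mem _ hQs₀F⟩
    have hSk1bdd : BddBelow ((fun Qs : 𝒳 → 𝒜 → ℝ =>
        supNorm (fun x a => Qseq (k+1) x a - Qs x a)) '' FStar) := by
      refine ⟨0, ?_⟩
      rintro y ⟨Qs, _, rfl⟩
      exact tt_supNorm_nonneg _
    have hLk : L k = W * sInf ((fun Qs : 𝒳 → 𝒜 → ℝ =>
        supNorm (fun x a => Qseq k x a - Qs x a)) '' FStar) +
        tvNorm (fun x => μseq k x - μs x) := by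
      rw [hL k, μtileq k]
    have hLk1 : L (k+1) = W * sInf ((fun Qs : 𝒳 → 𝒜 → ℝ =>
        supNorm (fun x a => Qseq (k+1) x a - Qs x a)) '' FStar) +
        tvNorm (fun x => μseq (k+1) x - μs x) := by
      rw [hL (k+1), μtileq (k+1)]
    apply le_of_forall_pos_le_add
    intro ε hε
    have hεpos : 0 < ε / ((1 - c) * W) := div_pos hε (mul_pos h1c hW)
    obtain ⟨y, hyS, hylt⟩ := Real.lt_sInf_add_pos hSkne hεpos
    obtain ⟨Qs, hQsF', rfl⟩ := hyS
    have hq := qstep k Qs hQsF'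
    have hm := mustep k
    have ha0 : 0 ≤ supNorm (fun x a => Qseq k x a - Qs x a) := tt_supNorm_nonneg _
    have ht0 : 0 ≤ tvNorm (fun x => μseq k x - μs x) := tt_tvNorm_nonneg _
    have hsInf1 : sInf ((fun Qs : 𝒳 → 𝒜 → ℝ =>
        supNorm (fun x a => Qseq (k+1) x a - Qs x a)) '' FStar) ≤
        supNorm (fun x a => Qseq (k+1) x a - Qs x a) :=
      csInf_le hSk1bdd ⟨Qs, hQsF', rfl⟩
    have hmid : W * supNorm (fun x a => Qseq (k+1) x a - Qs x a) +
        tvNorm (fun x => μseq (k+1) x - μs x) ≤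
        (1 - c) * (W * supNorm (fun x a => Qseq k x a - Qs x a) +
          tvNorm (fun x => μseq k x - μs x)) := by
      have s1 : W * supNorm (fun x a => Qseq (k+1) x a - Qs x a) ≤
          W * ((1 - ρQ * (1 - e)) * supNorm (fun x a => Qseq k x a - Qs x a) +
            ρQ * (h * Lf + e * Lp * M) * tvNorm (fun x => μseq k x - μs x)) :=
        mul_le_mul_of_nonneg_left hq hW.le
      have e1 : (1 - ρQ * (1 - e)) * supNorm (fun x a => Qseq k x a - Qs x a) ≤
          (1 - c) * supNorm (fun x a => Qseq k x a - Qs x a) :=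
        mul_le_mul_of_nonneg_right (by linarith [hcap1]) ha0
      have s2 : W * ((1 - ρQ * (1 - e)) * supNorm (fun x a => Qseq k x a - Qs x a)) ≤
          W * ((1 - c) * supNorm (fun x a => Qseq k x a - Qs x a)) :=
        mul_le_mul_of_nonneg_left e1 hW.le
      have s3 : (W * ρQ * (h * Lf + e * Lp * M) + (1 - ρμ * (β - Lp/2))) *
          tvNorm (fun x => μseq k x - μs x) ≤ (1 - c) * tvNorm (fun x => μseq k x - μs x) :=
        mul_le_mul_of_nonneg_right hcap2 ht0
      linarith only [s1, s2, s3, hm]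
    calc L (k+1) = W * sInf ((fun Qs : 𝒳 → 𝒜 → ℝ =>
          supNorm (fun x a => Qseq (k+1) x a - Qs x a)) '' FStar) +
          tvNorm (fun x => μseq (k+1) x - μs x) := hLk1
      _ ≤ W * supNorm (fun x a => Qseq (k+1) x a - Qs x a) +
          tvNorm (fun x => μseq (k+1) x - μs x) := by
          have := mul_le_mul_of_nonneg_left hsInf1 hW.le
          linarith
      _ ≤ (1 - c) * (W * supNorm (fun x a => Qseq k x a - Qs x a) +
          tvNorm (fun x => μseq k x - μs x)) := hmid
      _ ≤ (1 - c) * (W * (sInf ((fun Qs : 𝒳 → 𝒜 → ℝ =>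
          supNorm (fun x a => Qseq k x a - Qs x a)) '' FStar) + ε / ((1 - c) * W)) +
          tvNorm (fun x => μseq k x - μs x)) := by
          apply mul_le_mul_of_nonneg_left _ h1c.le
          have h7 := mul_le_mul_of_nonneg_left hylt.le hW.le
          linarith
      _ = (1 - c) * L k + ε := by
          rw [hLk]
          field_simp
          ring
  -- conclusion
  have hmain : ∀ k, L k ≤ (1 - c) ^ k * L 0 := by
    intro k
    induction k with
    | zero => simp
    | succ n ih =>
      calc L (n+1) ≤ (1 - c) * L n := hLstep n
        _ ≤ (1 - c) * ((1 - c) ^ n * L 0) := by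
            apply mul_le_mul_of_nonneg_left ih (by linarith)
        _ = (1 - c) ^ (n+1) * L 0 := by ring
  have hD0 : 0 ≤ 2 * h * Λμ * LQ * ρQ * F /
      (c * (1 - e) * (2 * β - 1 - Lp)) := by
    have hnum : 0 ≤ 2 * h * Λμ * LQ * ρQ * F :=
      mul_nonneg (mul_nonneg (mul_nonneg (mul_nonneg (by linarith : (0:ℝ) ≤ 2 * h) hΛ0.le)
        hLQ.le) hρQ0.le) hF0
    have hden : 0 < c * (1 - e) * (2 * β - 1 - Lp) :=
      mul_pos (mul_pos hc0 hσ) hδ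
    exact div_nonneg hnum hden.le
  intro k
  have := hmain k
  linarith
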